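/- arXiv:2009.08573 — 7 statements merged into one kernel-verified Lean document; each statement's English description precedes it below -/
import Mathlib

section
/- Let d ≥ 1, n > d, m = n − d, and let D = D^{(d)} be the d-th order difference matrix. Let S ⊆ {1,…,m} be nonempty and suppose S = S₁ ∪ S₂ where S₁, S₂ are nonempty and |s − t| > d for every s ∈ S₁ and t ∈ S₂. Let σ > 0, let f ∈ ℝⁿ satisfy D_S f = 0, let ε be a random vector in ℝⁿ with i.i.d. coordinates of law N(0, σ²), set y = f + ε and u = (D_S D_Sᵀ)⁻¹ D_S y. Then the random subvectors (u_s)_{s ∈ S₁} and (u_t)_{t ∈ S₂} are independent. -/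
open Matrix BigOperators MeasureTheory ProbabilityTheory

/-- The `d`-th order difference matrix `D^{(d)}`, of size `(n-d) × n`. -/
noncomputable def diffMatrix (d n : ℕ) : Matrix (Fin (n - d)) (Fin n) ℝ := fun i j =>
  if (i : ℕ) ≤ (j : ℕ) ∧ (j : ℕ) ≤ (i : ℕ) + d then
    (-1 : ℝ) ^ (d - ((j : ℕ) - (i : ℕ))) * (Nat.choose d ((j : ℕ) - (i : ℕ)))
  else 0

/-- The submatrix of `A` consisting of the rows indexed by the finite set `S`. -/
noncomputable def rowSub {m n : ℕ} (A : Matrix (Fin m) (Fin n) ℝ) (S : Finset (Fin m)) :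
    Matrix {i // i ∈ S} (Fin n) ℝ := A.submatrix (fun p => (p : Fin m)) id

/-!
Colour each row `s ∈ S` by whether `s ∈ S₁`, and each coordinate `j` by whether it lies within
distance `d` to the right of some `s ∈ S₁`. Thanks to the separation, `D_S` only has nonzero
entries between equally coloured rows and columns. This block structure passes to the Gram matrix
`D_S D_Sᵀ`, to its inverse, and to `(D_S D_Sᵀ)⁻¹ D_S`. Hence `u` on `S₁` is a function of the
coordinates of `y` of one colour and `u` on `S₂` of those of the other colour; these are
independent because the coordinates of `y = f + ε` are. -/

namespace Matrix

variable {ι κ ν R α : Type*}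

theorem colors_eq_of_mul_apply_ne_zero [Fintype κ] [NonUnitalNonAssocSemiring R]
    {A : Matrix ι κ R} {B : Matrix κ ν R} {a : ι → α} {b : κ → α}
    {c : ν → α} (hA : ∀ i j, A i j ≠ 0 → a i = b j) (hB : ∀ j k, B j k ≠ 0 → b j = c k)
    {i : ι} {k : ν} (h : (A * B) i k ≠ 0) : a i = c k := by
  obtain ⟨j, -, hj⟩ := Finset.exists_ne_zero_of_sum_ne_zero h
  exact (hA i j (left_ne_zero_of_mul hj)).trans (hB j k (right_ne_zero_of_mul hj))

theorem colors_eq_of_inv_apply_ne_zero [Fintype ι] [DecidableEq ι] [CommRing R]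
    {A : Matrix ι ι R} {a : ι → α} (hA : ∀ i j, A i j ≠ 0 → a i = a j)
    {i j : ι} (h : A⁻¹ i j ≠ 0) : a i = a j := by
  classical
  by_contra hij
  by_cases hdet : IsUnit A.det
  · let b : ι → Bool := fun k => decide (a k = a i)
    have hb : A.BlockTriangular b := fun k l hlt => by
      by_contra hkl
      exact hlt.ne (by simp only [b, hA k l hkl])
    let := A.invertibleOfIsUnitDet hdet
    exact h (blockTriangular_inv_of_blockTriangular hb (by simp [b, Ne.symm hij]))
  · exact h (by simp [nonsing_inv_apply_not_isUnit A hdet])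

theorem colors_eq_of_gram_inv_mul_apply_ne_zero [Fintype ι] [DecidableEq ι] [Fintype κ]
    [CommRing R] {A : Matrix ι κ R} {a : ι → α} {b : κ → α}
    (hA : ∀ i j, A i j ≠ 0 → a i = b j) {i : ι} {j : κ} (h : ((A * Aᵀ)⁻¹ * A) i j ≠ 0) :
    a i = b j := by
  have hAT : ∀ j i, Aᵀ j i ≠ 0 → b j = a i := fun j i h => (hA i j h).symm
  have hgram : ∀ i i', (A * Aᵀ) i i' ≠ 0 → a i = a i' := fun _ _ =>
    colors_eq_of_mul_apply_ne_zero (B := Aᵀ) hA hAT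
  have hinv : ∀ i i', (A * Aᵀ)⁻¹ i i' ≠ 0 → a i = a i' := fun _ _ =>
    colors_eq_of_inv_apply_ne_zero hgram
  exact colors_eq_of_mul_apply_ne_zero hinv hA h

theorem mulVec_eq_submatrix_mulVec_restrict [Fintype κ] [NonUnitalNonAssocSemiring R] {M : Matrix ι κ R} {J : Finset κ}
    (hM : ∀ i, ∀ j ∉ J, M i j = 0) (x : κ → R) :
    M *ᵥ x = M.submatrix id ((↑) : J → κ) *ᵥ fun j => x j := by
  ext i
  simp only [mulVec, dotProduct, submatrix_apply, id]
  rw [Finset.sum_coe_sort J fun j => M i j * x j]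
  exact (Finset.sum_subset (Finset.subset_univ J) fun j _ hj => by rw [hM i j hj, zero_mul]).symm

theorem measurable_mulVec [Fintype κ] (M : Matrix ι κ ℝ) : Measurable (M *ᵥ ·) :=
  measurable_pi_lambda _ fun _ =>
    Finset.measurable_sum _ fun j _ => (measurable_pi_apply j).const_mul _

end Matrix

theorem indepFun_mulVec_of_disjoint_support {Ω ι₁ ι₂ κ : Type*} [MeasurableSpace Ω]
    {P : Measure Ω} [Fintype κ] {X : κ → Ω → ℝ} (hX : ∀ j, Measurable (X j))
    (hindep : iIndepFun X P) {M₁ : Matrix ι₁ κ ℝ} {M₂ : Matrix ι₂ κ ℝ} {J₁ J₂ : Finset κ}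
    (hJ : Disjoint J₁ J₂) (hM₁ : ∀ i, ∀ j ∉ J₁, M₁ i j = 0) (hM₂ : ∀ i, ∀ j ∉ J₂, M₂ i j = 0) :
    IndepFun (fun ω => M₁ *ᵥ fun j => X j ω) (fun ω => M₂ *ᵥ fun j => X j ω) P := by
  simp only [mulVec_eq_submatrix_mulVec_restrict hM₁, mulVec_eq_submatrix_mulVec_restrict hM₂]
  exact (hindep.indepFun_finset J₁ J₂ hJ hX).comp (measurable_mulVec _) (measurable_mulVec _)

theorem le_and_le_add_of_diffMatrix_apply_ne_zero {d n : ℕ} {i : Fin (n - d)} {j : Fin n}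
    (h : diffMatrix d n i j ≠ 0) : (i : ℕ) ≤ j ∧ (j : ℕ) ≤ i + d := by
  by_contra hij
  exact h (if_neg hij)

theorem mem_iff_exists_band_of_diffMatrix_apply_ne_zero {d n : ℕ} {S₁ S₂ : Finset (Fin (n - d))}
    (hsep : ∀ s ∈ S₁, ∀ t ∈ S₂, (d : ℤ) < |((s : ℕ) : ℤ) - ((t : ℕ) : ℤ)|)
    {s : Fin (n - d)} (hs : s ∈ S₁ ∪ S₂) {j : Fin n} (h : diffMatrix d n s j ≠ 0) :
    s ∈ S₁ ↔ ∃ t ∈ S₁, (t : ℕ) ≤ j ∧ (j : ℕ) ≤ t + d := by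
  obtain ⟨hsj, hjs⟩ := le_and_le_add_of_diffMatrix_apply_ne_zero h
  refine ⟨fun hs₁ => ⟨s, hs₁, hsj, hjs⟩, fun ⟨t, ht, htj, hjt⟩ => ?_⟩
  by_contra hs₁
  have := lt_abs.mp (hsep t ht s ((Finset.mem_union.mp hs).resolve_left hs₁))
  omega

theorem stmt1 {Ω : Type*} [MeasurableSpace Ω] (P : Measure Ω)
    (d n : ℕ)
    (S S₁ S₂ : Finset (Fin (n - d)))
    (hS12 : S = S₁ ∪ S₂)
    (hsep : ∀ s ∈ S₁, ∀ t ∈ S₂, (d : ℤ) < |((s : ℕ) : ℤ) - ((t : ℕ) : ℤ)|)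
    (f : Fin n → ℝ)
    (ε : Fin n → Ω → ℝ) (hmeas : ∀ i, Measurable (ε i))
    (hindep : iIndepFun ε P) :
    let DS := rowSub (diffMatrix d n) S
    let u : Ω → ({i // i ∈ S} → ℝ) :=
      fun ω => ((DS * DSᵀ)⁻¹ * DS).mulVec (fun i => f i + ε i ω)
    IndepFun
      (fun ω => fun p : {i // i ∈ S₁} =>
        u ω ⟨p.1, by rw [hS12]; exact Finset.mem_union_left _ p.2⟩)
      (fun ω => fun q : {i // i ∈ S₂} =>
        u ω ⟨q.1, by rw [hS12]; exact Finset.mem_union_right _ q.2⟩) P := by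
  classical
  intro DS u
  let J : Finset (Fin n) := {j | ∃ s ∈ S₁, (s : ℕ) ≤ j ∧ (j : ℕ) ≤ s + d}
  have hDS : ∀ i j, DS i j ≠ 0 → (i.1 ∈ S₁) = (j ∈ J) := fun i j h => by
    simpa [J] using mem_iff_exists_band_of_diffMatrix_apply_ne_zero hsep (hS12 ▸ i.2) h
  have hM : ∀ i j, ((DS * DSᵀ)⁻¹ * DS) i j ≠ 0 → (i.1 ∈ S₁) = (j ∈ J) := fun _ _ =>
    Matrix.colors_eq_of_gram_inv_mul_apply_ne_zero hDS
  have hY : iIndepFun (fun j ω => f j + ε j ω) P :=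
    hindep.comp (fun j x => f j + x) fun _ => measurable_const_add _
  refine indepFun_mulVec_of_disjoint_support (fun j => (hmeas j).const_add (f j)) hY
    (disjoint_compl_right (a := J)) (fun p j hj => ?_) (fun q j hj => ?_)
  · by_contra h
    exact hj ((hM _ j h).mp p.2)
  · by_contra h
    have hq₁ : q.1 ∈ S₁ := (hM _ j h).mpr (Finset.notMem_compl.mp hj)
    exact absurd (hsep q hq₁ q q.2) (by simp)
end

section
/- Let D be an m×n real matrix, y ∈ ℝⁿ, and λ ≥ 0. Suppose û minimizes the function u ↦ (1/2)‖y − Dᵀu‖₂² over the hypercube C = {u ∈ ℝ^m : ‖u‖_∞ ≤ λ}. Then f̂ := y − Dᵀû is the unique minimizer over ℝⁿ of the trend filtering objective f ↦ (1/2)‖y − f‖₂² + λ‖Df‖₁. -/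
open Matrix BigOperators

/-- The trend filtering objective `f ↦ (1/2)‖y − f‖₂² + λ‖Df‖₁`. -/
noncomputable def tfObj {m n : ℕ} (D : Matrix (Fin m) (Fin n) ℝ) (y : Fin n → ℝ)
    (lam : ℝ) (f : Fin n → ℝ) : ℝ :=
  (1 / 2) * ∑ i, (y i - f i) ^ 2 + lam * ∑ j, |D.mulVec f j|

/-- The dual objective `u ↦ (1/2)‖y − Dᵀu‖₂²`. -/
noncomputable def tfDualObj {m n : ℕ} (D : Matrix (Fin m) (Fin n) ℝ) (y : Fin n → ℝ)
    (u : Fin m → ℝ) : ℝ :=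
  (1 / 2) * ∑ i, (y i - Dᵀ.mulVec u i) ^ 2

/-! The dual objective is quadratic, so minimality of `û` along every segment of the convex
`ℓ∞`-ball gives the variational inequality `⟨u − û, D f̂⟩ ≤ 0`, where `f̂ = y − Dᵀû`. Testing it
against `u = λ · sign (D f̂)` yields `λ‖D f̂‖₁ ≤ ⟨û, D f̂⟩`, while Hölder gives
`⟨û, D f⟩ ≤ λ‖D f‖₁` for every `f`. Expanding the square around `f̂` and moving `Dᵀ` across the
cross term `⟨f − f̂, Dᵀû⟩ = ⟨û, D(f − f̂)⟩`, the objective at `f` exceeds that at `f̂` by at least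
`½‖f − f̂‖²`. -/

open Filter Topology

lemma nonneg_of_forall_mul_add_sq_mul_nonneg {a c : ℝ}
    (h : ∀ t : ℝ, 0 < t → t ≤ 1 → 0 ≤ t * a + t ^ 2 * c) : 0 ≤ a := by
  have hlim : Tendsto (fun t : ℝ => a + t * c) (𝓝[>] 0) (𝓝 a) := by
    have : Continuous fun t : ℝ => a + t * c := by fun_prop
    simpa using (this.tendsto 0).mono_left nhdsWithin_le_nhds
  refine ge_of_tendsto hlim ?_
  filter_upwards [Ioc_mem_nhdsGT one_pos] with t ⟨ht0, ht1⟩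
  exact nonneg_of_mul_nonneg_right (by linarith [h t ht0 ht1]) ht0

section DotProduct

variable {ι : Type*} [Fintype ι]

lemma sum_sq_eq_dotProduct_self (x : ι → ℝ) : ∑ i, x i ^ 2 = x ⬝ᵥ x := by
  simp only [dotProduct, sq]

lemma dotProduct_self_pos {x : ι → ℝ} (hx : x ≠ 0) : 0 < x ⬝ᵥ x :=
  (Finset.sum_nonneg fun i _ => mul_self_nonneg (x i)).lt_of_ne
    (Ne.symm (dotProduct_self_eq_zero.not.2 hx))

lemma mem_closedBall_zero_iff_forall_abs_le {x : ι → ℝ} {lam : ℝ} (hlam : 0 ≤ lam) :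
    x ∈ Metric.closedBall 0 lam ↔ ∀ j, |x j| ≤ lam := by
  simp only [mem_closedBall_zero_iff, pi_norm_le_iff_of_nonneg hlam, Real.norm_eq_abs]

lemma dotProduct_le_mul_sum_abs {u : ι → ℝ} {lam : ℝ} (hu : ∀ j, |u j| ≤ lam) (w : ι → ℝ) :
    u ⬝ᵥ w ≤ lam * ∑ j, |w j| := by
  rw [dotProduct, Finset.mul_sum]
  refine Finset.sum_le_sum fun j _ => ?_
  calc u j * w j ≤ |u j| * |w j| := by rw [← abs_mul]; exact le_abs_self _
    _ ≤ lam * |w j| := by gcongr; exact hu j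

lemma exists_dotProduct_eq_mul_sum_abs {lam : ℝ} (hlam : 0 ≤ lam) (w : ι → ℝ) :
    ∃ u : ι → ℝ, (∀ j, |u j| ≤ lam) ∧ u ⬝ᵥ w = lam * ∑ j, |w j| := by
  refine ⟨fun j => if 0 ≤ w j then lam else -lam, fun j => ?_, ?_⟩
  · dsimp only
    split_ifs <;> simp [abs_of_nonneg hlam]
  · rw [dotProduct, Finset.mul_sum]
    refine Finset.sum_congr rfl fun j _ => ?_
    split_ifs with hw
    · rw [abs_of_nonneg hw]
    · rw [abs_of_neg (not_le.1 hw)]; ring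

end DotProduct

section TrendFiltering

variable {m n : ℕ} (D : Matrix (Fin m) (Fin n) ℝ) (y : Fin n → ℝ)

lemma dotProduct_transpose_mulVec (x : Fin n → ℝ) (u : Fin m → ℝ) :
    x ⬝ᵥ Dᵀ *ᵥ u = u ⬝ᵥ D *ᵥ x := by
  rw [dotProduct_mulVec, vecMul_transpose, dotProduct_comm]

lemma tfDualObj_eq (u : Fin m → ℝ) :
    tfDualObj D y u = (1 / 2) * ((y - Dᵀ *ᵥ u) ⬝ᵥ (y - Dᵀ *ᵥ u)) := by
  rw [tfDualObj, ← sum_sq_eq_dotProduct_self]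
  rfl

lemma tfDualObj_add_smul (u v : Fin m → ℝ) (t : ℝ) :
    tfDualObj D y (u + t • v) = tfDualObj D y u - t * (v ⬝ᵥ D *ᵥ (y - Dᵀ *ᵥ u))
      + t ^ 2 * ((1 / 2) * ((Dᵀ *ᵥ v) ⬝ᵥ (Dᵀ *ᵥ v))) := by
  rw [tfDualObj_eq, tfDualObj_eq, ← dotProduct_transpose_mulVec, mulVec_add, mulVec_smul,
    show y - (Dᵀ *ᵥ u + t • Dᵀ *ᵥ v) = (y - Dᵀ *ᵥ u) - t • Dᵀ *ᵥ v by abel]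
  generalize y - Dᵀ *ᵥ u = r, Dᵀ *ᵥ v = w
  simp only [sub_dotProduct, dotProduct_sub, smul_dotProduct, dotProduct_smul, smul_eq_mul,
    dotProduct_comm w r]
  ring

lemma IsMinOn.tfDualObj_sub_dotProduct_nonpos {K : Set (Fin m → ℝ)} (hK : Convex ℝ K)
    {uhat : Fin m → ℝ} (huhat : uhat ∈ K) (hmin : IsMinOn (tfDualObj D y) K uhat)
    {u : Fin m → ℝ} (hu : u ∈ K) :
    (u - uhat) ⬝ᵥ D *ᵥ (y - Dᵀ *ᵥ uhat) ≤ 0 := by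
  have hslope := nonneg_of_forall_mul_add_sq_mul_nonneg
    (a := -((u - uhat) ⬝ᵥ D *ᵥ (y - Dᵀ *ᵥ uhat)))
    (c := (1 / 2) * ((Dᵀ *ᵥ (u - uhat)) ⬝ᵥ (Dᵀ *ᵥ (u - uhat)))) fun t ht0 ht1 => by
      have hle := isMinOn_iff.1 hmin _ (hK.add_smul_sub_mem huhat hu ⟨ht0.le, ht1⟩)
      rw [tfDualObj_add_smul] at hle
      linarith
  linarith

lemma IsMinOn.tfDualObj_mul_sum_abs_le_dotProduct {lam : ℝ} (hlam : 0 ≤ lam) {uhat : Fin m → ℝ}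
    (huhat : uhat ∈ Metric.closedBall 0 lam)
    (hmin : IsMinOn (tfDualObj D y) (Metric.closedBall 0 lam) uhat) :
    lam * ∑ j, |(D *ᵥ (y - Dᵀ *ᵥ uhat)) j| ≤ uhat ⬝ᵥ D *ᵥ (y - Dᵀ *ᵥ uhat) := by
  obtain ⟨u, hu, hu_dot⟩ := exists_dotProduct_eq_mul_sum_abs hlam (D *ᵥ (y - Dᵀ *ᵥ uhat))
  have hvi := hmin.tfDualObj_sub_dotProduct_nonpos D y (convex_closedBall 0 lam) huhat
    ((mem_closedBall_zero_iff_forall_abs_le hlam).2 hu)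
  rw [sub_dotProduct] at hvi
  linarith

lemma tfObj_eq_add (lam : ℝ) {uhat : Fin m → ℝ} {fhat : Fin n → ℝ}
    (hfhat : fhat = y - Dᵀ *ᵥ uhat) (f : Fin n → ℝ) :
    tfObj D y lam f = tfObj D y lam fhat + (1 / 2) * ((f - fhat) ⬝ᵥ (f - fhat))
      + (lam * ∑ j, |(D *ᵥ f) j| - uhat ⬝ᵥ D *ᵥ f)
      - (lam * ∑ j, |(D *ᵥ fhat) j| - uhat ⬝ᵥ D *ᵥ fhat) := by
  have hcross : (f - fhat) ⬝ᵥ Dᵀ *ᵥ uhat = uhat ⬝ᵥ D *ᵥ f - uhat ⬝ᵥ D *ᵥ fhat := by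
    rw [dotProduct_transpose_mulVec, mulVec_sub, dotProduct_sub]
  have hres : y - f = Dᵀ *ᵥ uhat - (f - fhat) := by rw [hfhat]; abel
  have hres_hat : y - fhat = Dᵀ *ᵥ uhat := by rw [hfhat]; abel
  simp only [tfObj, ← Pi.sub_apply y, sum_sq_eq_dotProduct_self, hres, hres_hat]
  simp only [sub_dotProduct, dotProduct_sub] at hcross ⊢
  linarith [dotProduct_comm (Dᵀ *ᵥ uhat) f, dotProduct_comm (Dᵀ *ᵥ uhat) fhat,
    dotProduct_comm f fhat]

end TrendFiltering

/-- Primal–dual correspondence: if `û` minimizes the dual objective over the hypercube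
`{u : ‖u‖_∞ ≤ λ}`, then `f̂ = y − Dᵀû` is the unique minimizer of the trend filtering
objective. -/
theorem stmt4 {m n : ℕ} (D : Matrix (Fin m) (Fin n) ℝ) (y : Fin n → ℝ)
    (lam : ℝ) (hlam : 0 ≤ lam) (uhat : Fin m → ℝ)
    (hfeas : ∀ j, |uhat j| ≤ lam)
    (hmin : ∀ u : Fin m → ℝ, (∀ j, |u j| ≤ lam) →
      tfDualObj D y uhat ≤ tfDualObj D y u) :
    ∀ f : Fin n → ℝ, f ≠ (fun i => y i - Dᵀ.mulVec uhat i) →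
      tfObj D y lam (fun i => y i - Dᵀ.mulVec uhat i) < tfObj D y lam f := by
  intro f hf
  change f ≠ y - Dᵀ *ᵥ uhat at hf
  show tfObj D y lam (y - Dᵀ *ᵥ uhat) < _
  have hbox (u : Fin m → ℝ) := mem_closedBall_zero_iff_forall_abs_le (x := u) hlam
  have hslack := IsMinOn.tfDualObj_mul_sum_abs_le_dotProduct D y hlam ((hbox uhat).2 hfeas)
    (isMinOn_iff.2 fun u hu => hmin u ((hbox u).1 hu))
  have hgap := dotProduct_self_pos (sub_ne_zero.2 hf)
  rw [tfObj_eq_add D y lam (uhat := uhat) rfl f]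
  linarith [dotProduct_le_mul_sum_abs hfeas (D *ᵥ f)]
end

section
/- Let D be an m×n real matrix, y ∈ ℝⁿ, λ ≥ 0, and f̂ ∈ ℝⁿ. Then f̂ minimizes the function f ↦ (1/2)‖y − f‖₂² + λ‖Df‖₁ over ℝⁿ if and only if there exists γ ∈ ℝ^m such that ‖γ‖_∞ ≤ 1, γᵢ = 1 whenever [Df̂]ᵢ > 0, γᵢ = −1 whenever [Df̂]ᵢ < 0, and y − f̂ = λ Dᵀγ. -/
/-!
The subdifferential of `‖·‖₁` at `b` is `∂‖b‖₁ = {γ : ‖γ‖_∞ ≤ 1, ⟪γ, b⟫ = ‖b‖₁}`, and along any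
direction `d` the right derivative of `t ↦ ‖b + t d‖₁` at `0` is attained by some `γ ∈ ∂‖b‖₁`.
If `f̂` is a minimizer, comparing with `f̂ + t v` for small `t > 0` therefore gives, for every `v`,
some `γ ∈ ∂‖Df̂‖₁` with `⟪y − f̂, v⟫ ≤ λ⟪Dᵀγ, v⟫`; so `y − f̂` cannot be strictly separated from the
compact convex set `λ Dᵀ ∂‖Df̂‖₁`, and Hahn–Banach puts it inside. Conversely, for such a
certificate `γ` and `λ ≥ 0`, `⟪γ, Df⟫ ≤ ‖Df‖₁` yields `obj f ≥ obj f̂ + ½‖f − f̂‖₂²`.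
-/

open Matrix BigOperators

open Filter Topology

lemma mul_eq_abs_iff_of_abs_le_one {g b : ℝ} (hg : |g| ≤ 1) :
    g * b = |b| ↔ (0 < b → g = 1) ∧ (b < 0 → g = -1) := by
  rw [abs_le] at hg
  rcases lt_trichotomy b 0 with hb | rfl | hb
  · rw [abs_of_neg hb]
    constructor
    · intro h; exact ⟨fun h' => absurd hb h'.not_gt, fun _ => by nlinarith⟩
    · rintro ⟨-, h⟩; rw [h hb]; ring
  · simp
  · rw [abs_of_pos hb]
    constructor
    · intro h; exact ⟨fun _ => by nlinarith, fun h' => absurd hb h'.not_gt⟩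
    · rintro ⟨h, -⟩; rw [h hb]; ring

lemma exists_abs_le_one_eventually_abs_add_mul (b d : ℝ) :
    ∃ g, |g| ≤ 1 ∧ g * b = |b| ∧ ∀ᶠ t in 𝓝[>] (0 : ℝ), |b + t * d| = |b| + t * (g * d) := by
  have hlim : Tendsto (fun t => b + t * d) (𝓝[>] 0) (𝓝 b) :=
    ((continuous_const.add (continuous_id.mul continuous_const)).tendsto' 0 b
      (by simp)).mono_left nhdsWithin_le_nhds
  rcases lt_trichotomy b 0 with hb | rfl | hb
  · refine ⟨-1, by norm_num, by rw [abs_of_neg hb]; ring, ?_⟩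
    filter_upwards [hlim.eventually_lt_const hb] with t ht
    rw [abs_of_neg ht, abs_of_neg hb]; ring
  · have habs : ∀ t > 0, |0 + t * d| = |0| + t * |d| := fun t ht => by
      rw [zero_add, abs_zero, zero_add, abs_mul, abs_of_pos ht]
    rcases le_or_gt 0 d with hd | hd
    · refine ⟨1, by norm_num, by simp, ?_⟩
      filter_upwards [self_mem_nhdsWithin] with t ht
      rw [habs t ht, abs_of_nonneg hd, one_mul]
    · refine ⟨-1, by norm_num, by simp, ?_⟩
      filter_upwards [self_mem_nhdsWithin] with t ht
      rw [habs t ht, abs_of_neg hd, neg_one_mul]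
  · refine ⟨1, by norm_num, by rw [abs_of_pos hb]; ring, ?_⟩
    filter_upwards [hlim.eventually_const_lt hb] with t ht
    rw [abs_of_pos ht, abs_of_pos hb]; ring

lemma nonneg_of_eventually_nonneg_mul_add_sq_mul {A B : ℝ}
    (h : ∀ᶠ t in 𝓝[>] (0 : ℝ), 0 ≤ t * A + t ^ 2 * B) : 0 ≤ A := by
  have hlim : Tendsto (fun t => A + t * B) (𝓝[>] 0) (𝓝 A) :=
    ((continuous_const.add (continuous_id.mul continuous_const)).tendsto' 0 A
      (by simp)).mono_left nhdsWithin_le_nhds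
  refine ge_of_tendsto hlim ?_
  filter_upwards [h, self_mem_nhdsWithin] with t ht (htpos : 0 < t)
  exact (mul_nonneg_iff_of_pos_left htpos).1 (by linarith)

section L1Subdifferential

variable {ι : Type*} [Fintype ι]

/-- The subdifferential of `‖·‖₁` at `b`; the norm on `ι → ℝ` is the sup norm, so the ball is the
`ℓ∞` unit ball. -/
def l1Subdiff (b : ι → ℝ) : Set (ι → ℝ) :=
  Metric.closedBall 0 1 ∩ {γ | γ ⬝ᵥ b = ∑ i, |b i|}

lemma mem_l1Subdiff_iff_forall {b γ : ι → ℝ} :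
    γ ∈ l1Subdiff b ↔ ∀ i, |γ i| ≤ 1 ∧ γ i * b i = |b i| := by
  have hball : γ ∈ Metric.closedBall (0 : ι → ℝ) 1 ↔ ∀ i, |γ i| ≤ 1 := by
    simp only [Metric.mem_closedBall, dist_zero_right, pi_norm_le_iff_of_nonneg zero_le_one,
      Real.norm_eq_abs]
  refine ⟨fun ⟨hγ, hsum⟩ i => ?_, fun h => ⟨hball.2 fun i => (h i).1, ?_⟩⟩
  · have hle : ∀ j ∈ Finset.univ, γ j * b j ≤ |b j| := fun j _ =>
      (le_abs_self _).trans <| by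
        rw [abs_mul]; exact mul_le_of_le_one_left (abs_nonneg _) (hball.1 hγ j)
    exact ⟨hball.1 hγ i, (Finset.sum_eq_sum_iff_of_le hle).1 hsum i (Finset.mem_univ i)⟩
  · exact Finset.sum_congr rfl fun i _ => (h i).2

lemma mem_l1Subdiff_iff {b γ : ι → ℝ} :
    γ ∈ l1Subdiff b ↔
      (∀ i, |γ i| ≤ 1) ∧ (∀ i, 0 < b i → γ i = 1) ∧ (∀ i, b i < 0 → γ i = -1) := by
  simp only [mem_l1Subdiff_iff_forall]
  constructor
  · intro h
    exact ⟨fun i => (h i).1, fun i => ((mul_eq_abs_iff_of_abs_le_one (h i).1).1 (h i).2).1,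
      fun i => ((mul_eq_abs_iff_of_abs_le_one (h i).1).1 (h i).2).2⟩
  · rintro ⟨h1, hpos, hneg⟩ i
    exact ⟨h1 i, (mul_eq_abs_iff_of_abs_le_one (h1 i)).2 ⟨hpos i, hneg i⟩⟩

lemma convex_l1Subdiff (b : ι → ℝ) : Convex ℝ (l1Subdiff b) :=
  (convex_closedBall 0 1).inter <|
    convex_hyperplane ⟨fun x y => add_dotProduct x y b, fun c x => smul_dotProduct c x b⟩ _

lemma isCompact_l1Subdiff (b : ι → ℝ) : IsCompact (l1Subdiff b) :=
  (isCompact_closedBall 0 1).inter_right <| isClosed_eq (by fun_prop) continuous_const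

lemma dotProduct_le_sum_abs_of_mem_l1Subdiff {b γ : ι → ℝ} (hγ : γ ∈ l1Subdiff b) (d : ι → ℝ) :
    γ ⬝ᵥ d ≤ ∑ i, |d i| := by
  refine Finset.sum_le_sum fun i _ => (le_abs_self _).trans ?_
  rw [abs_mul]
  exact mul_le_of_le_one_left (abs_nonneg _) ((mem_l1Subdiff_iff_forall.1 hγ) i).1

lemma exists_mem_l1Subdiff_eventually_sum_abs_add_smul (b d : ι → ℝ) :
    ∃ γ ∈ l1Subdiff b,
      ∀ᶠ t in 𝓝[>] (0 : ℝ), ∑ i, |(b + t • d) i| = ∑ i, |b i| + t * (γ ⬝ᵥ d) := by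
  choose g hg1 hgb hev using fun i => exists_abs_le_one_eventually_abs_add_mul (b i) (d i)
  refine ⟨g, mem_l1Subdiff_iff_forall.2 fun i => ⟨hg1 i, hgb i⟩, ?_⟩
  filter_upwards [eventually_all.2 hev] with t ht
  simp only [Pi.add_apply, Pi.smul_apply, smul_eq_mul, ht, Finset.sum_add_distrib, dotProduct,
    Finset.mul_sum]

lemma mem_of_forall_exists_dotProduct_le {K : Set (ι → ℝ)}
    (hconv : Convex ℝ K) (hclosed : IsClosed K) {c : ι → ℝ}
    (h : ∀ v, ∃ k ∈ K, c ⬝ᵥ v ≤ k ⬝ᵥ v) : c ∈ K := by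
  classical
  by_contra hc
  obtain ⟨φ, u, hφK, hφc⟩ := geometric_hahn_banach_closed_point hconv hclosed hc
  set v : ι → ℝ := fun i => φ fun j => if i = j then 1 else 0
  have hφ : ∀ z, φ z = z ⬝ᵥ v := fun z => LinearMap.pi_apply_eq_sum_univ φ.toLinearMap z
  obtain ⟨k, hk, hle⟩ := h v
  have := hφK k hk
  rw [hφ] at this hφc
  linarith

end L1Subdifferential

section TrendFiltering

variable {m n : ℕ} (D : Matrix (Fin m) (Fin n) ℝ) (y : Fin n → ℝ)

lemma tfObj_add (lam : ℝ) (f h : Fin n → ℝ) :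
    tfObj D y lam (f + h) = tfObj D y lam f - (y - f) ⬝ᵥ h + (1 / 2) * ∑ i, h i ^ 2 +
      lam * (∑ j, |(D *ᵥ (f + h)) j| - ∑ j, |(D *ᵥ f) j|) := by
  have hsq : ∀ i, (y i - (f + h) i) ^ 2 = (y i - f i) ^ 2 - 2 * ((y - f) i * h i) + h i ^ 2 :=
    fun i => by simp only [Pi.add_apply, Pi.sub_apply]; ring
  simp only [tfObj, hsq, Finset.sum_add_distrib, Finset.sum_sub_distrib, ← Finset.mul_sum,
    dotProduct]
  ring

lemma tfObj_le_of_mem_l1Subdiff {lam : ℝ} (hlam : 0 ≤ lam) {fhat : Fin n → ℝ} {γ : Fin m → ℝ}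
    (hγ : γ ∈ l1Subdiff (D *ᵥ fhat)) (hfhat : y - fhat = lam • (Dᵀ *ᵥ γ)) (f : Fin n → ℝ) :
    tfObj D y lam fhat ≤ tfObj D y lam f := by
  have hpairing : (y - fhat) ⬝ᵥ (f - fhat) = lam * (γ ⬝ᵥ (D *ᵥ f) - ∑ j, |(D *ᵥ fhat) j|) := by
    rw [hfhat, smul_dotProduct, mulVec_transpose, ← dotProduct_mulVec, mulVec_sub,
      dotProduct_sub, hγ.2, smul_eq_mul]
  have hγf := mul_le_mul_of_nonneg_left (dotProduct_le_sum_abs_of_mem_l1Subdiff hγ (D *ᵥ f)) hlam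
  have hexpand := tfObj_add D y lam fhat (f - fhat)
  rw [add_sub_cancel] at hexpand
  rw [hexpand, hpairing]
  nlinarith [Finset.sum_nonneg fun i (_ : i ∈ Finset.univ) => sq_nonneg ((f - fhat) i)]

lemma exists_mem_l1Subdiff_dotProduct_le_of_forall_tfObj_le {lam : ℝ} {fhat : Fin n → ℝ}
    (hmin : ∀ f, tfObj D y lam fhat ≤ tfObj D y lam f) (v : Fin n → ℝ) :
    ∃ γ ∈ l1Subdiff (D *ᵥ fhat), (y - fhat) ⬝ᵥ v ≤ lam * (γ ⬝ᵥ (D *ᵥ v)) := by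
  obtain ⟨γ, hγ, hdir⟩ := exists_mem_l1Subdiff_eventually_sum_abs_add_smul (D *ᵥ fhat) (D *ᵥ v)
  refine ⟨γ, hγ, sub_nonneg.1 <| nonneg_of_eventually_nonneg_mul_add_sq_mul
    (B := (1 / 2) * ∑ i, v i ^ 2) ?_⟩
  -- for small `t > 0` the objective is exactly quadratic in `t` along `fhat + t • v`
  filter_upwards [hdir] with t ht
  have hle := hmin (fhat + t • v)
  rw [tfObj_add, mulVec_add, mulVec_smul, ht] at hle
  simp only [dotProduct_smul, smul_eq_mul, Pi.smul_apply, mul_pow, ← Finset.mul_sum] at hle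
  linarith

lemma exists_mem_l1Subdiff_of_forall_tfObj_le {lam : ℝ} {fhat : Fin n → ℝ}
    (hmin : ∀ f, tfObj D y lam fhat ≤ tfObj D y lam f) :
    ∃ γ ∈ l1Subdiff (D *ᵥ fhat), y - fhat = lam • (Dᵀ *ᵥ γ) := by
  let L : (Fin m → ℝ) →ₗ[ℝ] (Fin n → ℝ) := lam • Dᵀ.mulVecLin
  have hK : y - fhat ∈ L '' l1Subdiff (D *ᵥ fhat) := by
    refine mem_of_forall_exists_dotProduct_le ((convex_l1Subdiff _).linear_image L)
      ((isCompact_l1Subdiff _).image L.continuous_of_finiteDimensional).isClosed fun v => ?_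
    obtain ⟨γ, hγ, hle⟩ := exists_mem_l1Subdiff_dotProduct_le_of_forall_tfObj_le D y hmin v
    refine ⟨L γ, ⟨γ, hγ, rfl⟩, ?_⟩
    simpa [L, smul_dotProduct, mulVec_transpose, dotProduct_mulVec] using hle
  obtain ⟨γ, hγ, hLγ⟩ := hK
  exact ⟨γ, hγ, hLγ.symm⟩

end TrendFiltering

/-- KKT (subgradient) characterization of the trend filtering solution: `f̂` minimizes the
objective iff there is a subgradient `γ` of the `ℓ₁` norm at `Df̂` with
`y − f̂ = λ Dᵀγ`. -/
theorem stmt6 {m n : ℕ} (D : Matrix (Fin m) (Fin n) ℝ) (y : Fin n → ℝ)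
    (lam : ℝ) (hlam : 0 ≤ lam) (fhat : Fin n → ℝ) :
    (∀ f : Fin n → ℝ, tfObj D y lam fhat ≤ tfObj D y lam f) ↔
      ∃ γ : Fin m → ℝ, (∀ i, |γ i| ≤ 1) ∧
        (∀ i, 0 < D.mulVec fhat i → γ i = 1) ∧
        (∀ i, D.mulVec fhat i < 0 → γ i = -1) ∧
        (∀ i, y i - fhat i = lam * Dᵀ.mulVec γ i) := by
  constructor
  · intro hmin
    obtain ⟨γ, hγ, hfhat⟩ := exists_mem_l1Subdiff_of_forall_tfObj_le D y hmin
    obtain ⟨h1, hpos, hneg⟩ := mem_l1Subdiff_iff.1 hγ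
    exact ⟨γ, h1, hpos, hneg, fun i => congrFun hfhat i⟩
  · rintro ⟨γ, h1, hpos, hneg, hfhat⟩
    exact tfObj_le_of_mem_l1Subdiff D y hlam (mem_l1Subdiff_iff.2 ⟨h1, hpos, hneg⟩) (funext hfhat)
end

section
/- Let d ≥ 1 and n ≥ 2d, and let D = D^{(d)} be the d-th order difference matrix of size (n−d)×n. Then for all row indices i, j ∈ {1,…,n−d}: [D Dᵀ]_{i,j} = (−1)^{|i−j|} · binomial(2d, d + |i−j|) if |i − j| ≤ d, and [D Dᵀ]_{i,j} = 0 if |i − j| > d. In particular, D Dᵀ is a symmetric banded Toeplitz matrix of bandwidth d. -/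
/-!
Row `i` of `D` carries the coefficients of `(x - 1)^d` shifted by `i`, so for `i ≤ j` the
entry `(D Dᵀ)_{ij}` is a sum over the overlap `j ≤ k ≤ i + d` of the two supports. With
`m = j - i` and `k = j + s`, every term is `(-1)^m * C(d, m + s) * C(d, s)`, and Vandermonde's
identity sums these to `(-1)^m * C(2d, d + m)`; this vanishes once `m > d`.
-/

open Matrix BigOperators

open Finset

/-- By truncated subtraction, both sides vanish when `m > d`. -/
theorem Nat.sum_range_choose_add_mul_choose (d m : ℕ) :
    ∑ s ∈ range (d + 1 - m), d.choose (m + s) * d.choose s = (2 * d).choose (d + m) := by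
  rcases le_or_gt m d with hm | hm
  · have hsymm : (2 * d).choose (d + m) = (2 * d).choose (d - m) := by
      rw [← Nat.choose_symm (by omega)]; congr 1; omega
    rw [show d + 1 - m = d - m + 1 by omega, hsymm, two_mul, Nat.add_choose_eq,
      Nat.sum_antidiagonal_eq_sum_range_succ_mk]
    refine sum_congr rfl fun s hs => ?_
    rw [mem_range] at hs
    rw [Nat.mul_comm, ← Nat.choose_symm (n := d) (k := m + s) (by omega),
      show d - (m + s) = d - m - s by omega]
  · rw [show d + 1 - m = 0 by omega, Nat.choose_eq_zero_of_lt (by omega), sum_range_zero]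

theorem neg_one_pow_sub_mul_neg_one_pow_sub {R : Type*} [Monoid R] [HasDistribNeg R]
    {a b d : ℕ} (hba : b ≤ a) (had : a ≤ d) :
    (-1 : R) ^ (d - a) * (-1) ^ (d - b) = (-1) ^ (a - b) := by
  rw [← pow_add, show d - a + (d - b) = a - b + 2 * (d - a) by omega, pow_add, pow_mul,
    neg_one_sq, one_pow, mul_one]

variable {d n : ℕ} {i j : Fin (n - d)}

theorem diffMatrix_mul_diffMatrix_apply (hij : (i : ℕ) ≤ j) (k : Fin n) :
    diffMatrix d n i k * diffMatrix d n j k =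
      if (j : ℕ) ≤ k ∧ (k : ℕ) ≤ i + d then
        (-1 : ℝ) ^ ((j : ℕ) - i) * (d.choose (k - i) * d.choose (k - j))
      else 0 := by
  unfold diffMatrix
  split_ifs
  · rw [mul_mul_mul_comm,
      neg_one_pow_sub_mul_neg_one_pow_sub (a := k - i) (b := k - j) (by omega) (by omega),
      show (k : ℕ) - i - (k - j) = j - i by omega]
  all_goals first | omega | simp only [zero_mul, mul_zero]

theorem diffMatrix_mul_transpose_apply_of_le (hij : (i : ℕ) ≤ j) :
    (diffMatrix d n * (diffMatrix d n)ᵀ) i j =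
      (-1 : ℝ) ^ ((j : ℕ) - i) * (2 * d).choose (d + (j - i)) := by
  have hoverlap :
      (range n).filter (fun k => (j : ℕ) ≤ k ∧ k ≤ i + d) = Ico (j : ℕ) (i + d + 1) := by
    ext k
    simp only [mem_filter, mem_range, mem_Ico]
    omega
  calc (diffMatrix d n * (diffMatrix d n)ᵀ) i j
      = ∑ k ∈ range n, if (j : ℕ) ≤ k ∧ k ≤ i + d then
          (-1 : ℝ) ^ ((j : ℕ) - i) * (d.choose (k - i) * d.choose (k - j)) else 0 := by
        rw [mul_apply, ← Fin.sum_univ_eq_sum_range]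
        exact sum_congr rfl fun k _ => diffMatrix_mul_diffMatrix_apply hij k
    _ = ∑ s ∈ range (d + 1 - (j - i)),
          (-1 : ℝ) ^ ((j : ℕ) - i) * (d.choose ((j - i) + s) * d.choose s) := by
        rw [← sum_filter, hoverlap, sum_Ico_eq_sum_range,
          show (i : ℕ) + d + 1 - j = d + 1 - (j - i) by omega]
        refine sum_congr rfl fun s _ => ?_
        rw [show (j : ℕ) + s - i = (j - i) + s by omega, Nat.add_sub_cancel_left]
    _ = (-1 : ℝ) ^ ((j : ℕ) - i) * (2 * d).choose (d + (j - i)) := by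
        rw [← mul_sum]
        congr 1
        exact_mod_cast Nat.sum_range_choose_add_mul_choose d (j - i)

theorem stmt8_general (d n : ℕ) :
    (∀ i j : Fin (n - d),
      (diffMatrix d n * (diffMatrix d n)ᵀ) i j =
        if (((i : ℕ) : ℤ) - ((j : ℕ) : ℤ)).natAbs ≤ d then
          (-1 : ℝ) ^ ((((i : ℕ) : ℤ) - ((j : ℕ) : ℤ)).natAbs) *
            (Nat.choose (2 * d) (d + (((i : ℕ) : ℤ) - ((j : ℕ) : ℤ)).natAbs))
        else 0) ∧
    (diffMatrix d n * (diffMatrix d n)ᵀ).IsSymm := by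
  have hsymm : (diffMatrix d n * (diffMatrix d n)ᵀ).IsSymm := transpose_mul _ _
  refine ⟨fun i j => ?_, hsymm⟩
  have hentry : (diffMatrix d n * (diffMatrix d n)ᵀ) i j =
      (-1 : ℝ) ^ ((((i : ℕ) : ℤ) - ((j : ℕ) : ℤ)).natAbs) *
        (Nat.choose (2 * d) (d + (((i : ℕ) : ℤ) - ((j : ℕ) : ℤ)).natAbs)) := by
    rcases le_total (i : ℕ) j with hij | hji
    · rw [show (((i : ℕ) : ℤ) - ((j : ℕ) : ℤ)).natAbs = j - i by omega]
      exact diffMatrix_mul_transpose_apply_of_le hij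
    · rw [show (((i : ℕ) : ℤ) - ((j : ℕ) : ℤ)).natAbs = i - j by omega, ← hsymm.apply]
      exact diffMatrix_mul_transpose_apply_of_le hji
  split_ifs with hband
  · exact hentry
  · rw [hentry, Nat.choose_eq_zero_of_lt (by omega), Nat.cast_zero, mul_zero]

/-- Entries of `D D^T` for the `d`-th order difference matrix: a symmetric banded
Toeplitz matrix of bandwidth `d` with entries `(-1)^{|i-j|} * choose (2d) (d + |i-j|)`. -/
theorem stmt8 (d n : ℕ) (hd : 1 ≤ d) (hn : 2 * d ≤ n) :
    (∀ i j : Fin (n - d),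
      (diffMatrix d n * (diffMatrix d n)ᵀ) i j =
        if (((i : ℕ) : ℤ) - ((j : ℕ) : ℤ)).natAbs ≤ d then
          (-1 : ℝ) ^ ((((i : ℕ) : ℤ) - ((j : ℕ) : ℤ)).natAbs) *
            (Nat.choose (2 * d) (d + (((i : ℕ) : ℤ) - ((j : ℕ) : ℤ)).natAbs))
        else 0) ∧
    (diffMatrix d n * (diffMatrix d n)ᵀ).IsSymm :=
  stmt8_general d n
end

section
/- Let d ≥ 1, n > d, and let D = D^{(d)} be the d-th order difference matrix. Let X be the n×d real matrix with entries X_{i,k} = i^{k} for i = 1,…,n and k = 0,1,…,d−1. Then XᵀX is invertible and I_n − Dᵀ (D Dᵀ)⁻¹ D = X (XᵀX)⁻¹ Xᵀ; that is, the orthogonal projection of ℝⁿ onto the orthogonal complement of the row space of D equals the hat matrix of least squares polynomial regression of degree d − 1 on the design points 1,…,n. -/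
/-!
Both sides are hat matrices: the left side is `1 - hatMatrix Dᵀ`, the right side `hatMatrix X`.
The `d`-th finite difference kills polynomials of degree `< d`, so `D X = 0` and the two hat
matrices are orthogonal symmetric idempotents. Their traces `d` and `n - d` add up to `n`, so
`1 - hatMatrix X - hatMatrix Dᵀ` is a symmetric idempotent of trace zero, hence zero.
Invertibility of `XᵀX` and `DDᵀ` comes from a nonsingular square block: a Vandermonde block of
`X`, and the leading block of `D`, which is triangular with diagonal `(-1)ᵈ`.
-/

open Matrix BigOperators

/-- The polynomial-regression design matrix on the points `1, …, n`:
`X_{i,k} = i^k` for `i = 1, …, n` and `k = 0, …, d-1`. -/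
noncomputable def designMatrix (n d : ℕ) : Matrix (Fin n) (Fin d) ℝ := fun i k =>
  (((i : ℕ) : ℝ) + 1) ^ (k : ℕ)

open Finset

namespace Matrix

variable {ι κ μ : Type*} [Fintype ι] [Fintype κ] [Fintype μ] [DecidableEq κ] [DecidableEq μ]

lemma IsSymm.eq_zero_of_isIdempotentElem_of_trace_eq_zero {M : Matrix ι ι ℝ} (hM : M.IsSymm)
    (hM' : IsIdempotentElem M) (htr : M.trace = 0) : M = 0 := by
  rwa [← trace_conjTranspose_mul_self_eq_zero_iff, conjTranspose_eq_transpose_of_trivial, hM.eq,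
    hM'.eq]

lemma add_eq_one_of_trace_add_eq_card [DecidableEq ι] {P Q : Matrix ι ι ℝ} (hPs : P.IsSymm)
    (hQs : Q.IsSymm) (hP : IsIdempotentElem P) (hQ : IsIdempotentElem Q) (hPQ : P * Q = 0)
    (htr : P.trace + Q.trace = Fintype.card ι) : P + Q = 1 := by
  have hQP : Q * P = 0 := by rw [← hQs.eq, ← hPs.eq, ← transpose_mul, hPQ, transpose_zero]
  have hM := (isSymm_one.sub (hPs.add hQs)).eq_zero_of_isIdempotentElem_of_trace_eq_zero
    (hP.add hQ (by rw [hPQ, hQP, add_zero])).one_sub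
    (by rw [trace_sub, trace_add, htr, trace_one, sub_self])
  exact (sub_eq_zero.mp hM).symm

noncomputable def hatMatrix (A : Matrix ι κ ℝ) : Matrix ι ι ℝ := A * (Aᵀ * A)⁻¹ * Aᵀ

lemma isSymm_hatMatrix (A : Matrix ι κ ℝ) : (hatMatrix A).IsSymm := by
  rw [IsSymm, hatMatrix, transpose_mul, transpose_mul, transpose_transpose, transpose_nonsing_inv,
    transpose_mul, transpose_transpose, Matrix.mul_assoc]

variable {A : Matrix ι κ ℝ}

lemma isIdempotentElem_hatMatrix (h : IsUnit (Aᵀ * A).det) : IsIdempotentElem (hatMatrix A) :=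
  calc hatMatrix A * hatMatrix A = A * ((Aᵀ * A)⁻¹ * (Aᵀ * A)) * (Aᵀ * A)⁻¹ * Aᵀ := by
        simp only [hatMatrix, Matrix.mul_assoc]
    _ = hatMatrix A := by rw [nonsing_inv_mul _ h, Matrix.mul_one, hatMatrix]

lemma trace_hatMatrix (h : IsUnit (Aᵀ * A).det) : (hatMatrix A).trace = Fintype.card κ := by
  rw [hatMatrix, trace_mul_comm, ← Matrix.mul_assoc, mul_nonsing_inv _ h, trace_one]

lemma hatMatrix_mul_hatMatrix_eq_zero {B : Matrix ι μ ℝ} (h : Aᵀ * B = 0) :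
    hatMatrix A * hatMatrix B = 0 :=
  calc hatMatrix A * hatMatrix B = A * (Aᵀ * A)⁻¹ * (Aᵀ * B) * (Bᵀ * B)⁻¹ * Bᵀ := by
        simp only [hatMatrix, Matrix.mul_assoc]
    _ = 0 := by rw [h, Matrix.mul_zero, Matrix.zero_mul, Matrix.zero_mul]

theorem hatMatrix_add_hatMatrix_eq_one [DecidableEq ι] {B : Matrix ι μ ℝ}
    (hA : IsUnit (Aᵀ * A).det) (hB : IsUnit (Bᵀ * B).det) (hAB : Aᵀ * B = 0)
    (hcard : Fintype.card κ + Fintype.card μ = Fintype.card ι) :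
    hatMatrix A + hatMatrix B = 1 :=
  add_eq_one_of_trace_add_eq_card (isSymm_hatMatrix A) (isSymm_hatMatrix B)
    (isIdempotentElem_hatMatrix hA) (isIdempotentElem_hatMatrix hB)
    (hatMatrix_mul_hatMatrix_eq_zero hAB)
    (by rw [trace_hatMatrix hA, trace_hatMatrix hB, ← hcard, Nat.cast_add])

lemma isUnit_det_transpose_mul_self_of_det_submatrix_ne_zero (e : κ → ι)
    (h : (A.submatrix e id).det ≠ 0) : IsUnit (Aᵀ * A).det := by
  rw [isUnit_iff_ne_zero]
  intro h0
  obtain ⟨v, hv, hAv⟩ := exists_mulVec_eq_zero_iff.mpr h0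
  rw [← conjTranspose_eq_transpose_of_trivial, conjTranspose_mul_self_mulVec_eq_zero] at hAv
  exact hv (eq_zero_of_mulVec_eq_zero h (funext fun i => congrFun hAv (e i)))

end Matrix

variable {d n : ℕ}

lemma isUnit_det_designMatrix (h : d ≤ n) :
    IsUnit ((designMatrix n d)ᵀ * designMatrix n d).det := by
  refine isUnit_det_transpose_mul_self_of_det_submatrix_ne_zero (Fin.castLE h) ?_
  change (vandermonde fun i : Fin d => (i : ℝ) + 1).det ≠ 0
  rw [det_vandermonde_ne_zero_iff]
  intro a b hab
  simpa [Fin.ext_iff] using hab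

lemma det_submatrix_diffMatrix :
    ((diffMatrix d n).submatrix id (Fin.castLE (n.sub_le d))).det = (-1) ^ (d * (n - d)) := by
  rw [det_of_isUpperTriangular]
  · simp [diffMatrix, pow_mul]
  · intro i j (hij : j < i)
    simp only [submatrix_apply, id_eq, diffMatrix, Fin.val_castLE]
    rw [if_neg (by omega)]

lemma isUnit_det_diffMatrix_mul_transpose :
    IsUnit (diffMatrix d n * (diffMatrix d n)ᵀ).det := by
  rw [← transpose_transpose (diffMatrix d n)]
  refine isUnit_det_transpose_mul_self_of_det_submatrix_ne_zero (Fin.castLE (n.sub_le d)) ?_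
  rw [← transpose_submatrix, det_transpose, det_submatrix_diffMatrix]
  exact pow_ne_zero _ (by norm_num)

lemma diffMatrix_mulVec (f : ℝ → ℝ) (x : ℝ) (i : Fin (n - d)) :
    (diffMatrix d n *ᵥ fun j => f (j + x)) i = (fwdDiff 1)^[d] f (i + x) := by
  have hi : (i : ℕ) + d < n := by omega
  rw [fwdDiff_iter_eq_sum_shift]
  calc (diffMatrix d n *ᵥ fun j => f (j + x)) i
      = ∑ m ∈ range n, (if (i : ℕ) ≤ m ∧ m ≤ i + d then
          (-1) ^ (d - (m - i)) * (d.choose (m - i) : ℝ) else 0) * f (m + x) :=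
        Fin.sum_univ_eq_sum_range (fun m => (if (i : ℕ) ≤ m ∧ m ≤ i + d then
          (-1) ^ (d - (m - i)) * (d.choose (m - i) : ℝ) else 0) * f (m + x)) n
    _ = ∑ m ∈ Ico (i : ℕ) (i + (d + 1)),
          (-1) ^ (d - (m - i)) * (d.choose (m - i)) * f (m + x) := by
        simp only [ite_mul, zero_mul, ← sum_filter]
        congr 1
        ext m
        simp only [mem_filter, mem_range, mem_Ico]
        omega
    _ = _ := by
        rw [sum_Ico_eq_sum_range, Nat.add_sub_cancel_left]
        refine sum_congr rfl fun t _ => ?_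
        rw [Nat.add_sub_cancel_left, zsmul_eq_mul, nsmul_one, Nat.cast_add, add_right_comm]
        push_cast
        rfl

lemma diffMatrix_mul_designMatrix : diffMatrix d n * designMatrix n d = 0 := by
  ext i k
  have h := diffMatrix_mulVec (d := d) (n := n) (fun y => y ^ (k : ℕ)) 1 i
  rwa [fwdDiff_iter_pow_eq_zero_of_lt k.isLt] at h

theorem stmt11_general (d n : ℕ) (hdn : d < n) :
    IsUnit ((designMatrix n d)ᵀ * designMatrix n d).det ∧
    (1 : Matrix (Fin n) (Fin n) ℝ) -
        (diffMatrix d n)ᵀ * (diffMatrix d n * (diffMatrix d n)ᵀ)⁻¹ * diffMatrix d n =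
      designMatrix n d * ((designMatrix n d)ᵀ * designMatrix n d)⁻¹ * (designMatrix n d)ᵀ := by
  have hX := isUnit_det_designMatrix hdn.le
  have hXD : (designMatrix n d)ᵀ * (diffMatrix d n)ᵀ = 0 := by
    rw [← transpose_mul, diffMatrix_mul_designMatrix, transpose_zero]
  have hcard : Fintype.card (Fin d) + Fintype.card (Fin (n - d)) = Fintype.card (Fin n) := by
    simp only [Fintype.card_fin]
    omega
  -- `Dᵀ (D Dᵀ)⁻¹ D` is `hatMatrix Dᵀ` up to `Dᵀᵀ = D`, which holds definitionally.
  exact ⟨hX, (eq_sub_of_add_eq (hatMatrix_add_hatMatrix_eq_one hX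
    isUnit_det_diffMatrix_mul_transpose hXD hcard)).symm⟩

/-- `XᵀX` is invertible and `I - Dᵀ(DDᵀ)⁻¹D = X(XᵀX)⁻¹Xᵀ`: the orthogonal projection onto
the orthogonal complement of the row space of `D = D^{(d)}` is the hat matrix of degree
`d-1` polynomial least squares regression on the design points `1, …, n`. -/
theorem stmt11 (d n : ℕ) (hd : 1 ≤ d) (hdn : d < n) :
    IsUnit ((designMatrix n d)ᵀ * designMatrix n d).det ∧
    (1 : Matrix (Fin n) (Fin n) ℝ) -
        (diffMatrix d n)ᵀ * (diffMatrix d n * (diffMatrix d n)ᵀ)⁻¹ * diffMatrix d n =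
      designMatrix n d * ((designMatrix n d)ᵀ * designMatrix n d)⁻¹ * (designMatrix n d)ᵀ :=
  stmt11_general d n hdn
end

section
/- Let n ≥ 2 and let D = D^{(1)} be the (n−1)×n first-order difference matrix. Then for every y ∈ ℝⁿ and every t ∈ {1,…,n−1}: [(D Dᵀ)⁻¹ D y]_t = (t/n) Σ_{k=1}^{n} y_k − Σ_{k=1}^{t} y_k; equivalently, [(D Dᵀ)⁻¹ D y]_t = − Σ_{k=1}^{t} (y_k − ȳ) where ȳ = n⁻¹ Σ_{k=1}^{n} y_k, so the dual vector of first-order trend filtering is, up to sign, the CUSUM process of y. -/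
/-!
The candidate dual vector is minus the centered CUSUM, `v_t = -Σ_{k ≤ t} (y_k - ȳ)`. Centered
partial sums vanish before the first and after the last observation, so summation by parts
gives `Dᵀ v = y - ȳ·𝟙`; since `D` annihilates constants, `D Dᵀ v = D y`. Finally `D Dᵀ` is
positive definite, hence invertible, because `D` has a right inverse, the cumulative-sum matrix.
-/

open Matrix BigOperators

open Finset

theorem Fin.sum_ite_val_eq {M : Type*} [AddCommMonoid M] {n : ℕ} (f : Fin n → M) (m : ℕ) :
    ∑ j : Fin n, (if (j : ℕ) = m then f j else 0) = if h : m < n then f ⟨m, h⟩ else 0 := by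
  split_ifs with h
  · simp [← Fin.ext_iff (b := ⟨m, h⟩)]
  · exact sum_eq_zero fun j _ => if_neg (by omega)

theorem Matrix.posDef_mul_conjTranspose_self_of_mul_eq_one {m n R : Type*} [Fintype m]
    [Fintype n] [DecidableEq m] [CommRing R] [PartialOrder R] [StarRing R] [StarOrderedRing R]
    [NoZeroDivisors R] {A : Matrix m n R} {B : Matrix n m R} (h : A * B = 1) :
    (A * Aᴴ).PosDef :=
  .mul_conjTranspose_self A fun x x' hx => by
    simpa [vecMul_vecMul, h] using congrArg (· ᵥ* B) hx

section DiffMatrix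

variable {n : ℕ}

theorem diffMatrix_one_apply (i : Fin (n - 1)) (j : Fin n) :
    diffMatrix 1 n i j =
      (if (j : ℕ) = i + 1 then 1 else 0) - (if (j : ℕ) = i then 1 else 0) := by
  unfold diffMatrix
  split_ifs <;> first | omega | simp_all

theorem diffMatrix_one_mulVec (f : ℕ → ℝ) (i : Fin (n - 1)) :
    (diffMatrix 1 n *ᵥ fun j => f j) i = f (i + 1) - f i := by
  simp only [mulVec, dotProduct, diffMatrix_one_apply, sub_mul, ite_mul, one_mul, zero_mul,
    sum_sub_distrib, Fin.sum_ite_val_eq]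
  rw [dif_pos (by omega), dif_pos (by omega)]

theorem diffMatrix_one_mulVec_const (c : ℝ) : diffMatrix 1 n *ᵥ (fun _ => c) = 0 := by
  ext i
  simpa using diffMatrix_one_mulVec (fun _ => c) i

theorem diffMatrix_one_transpose_mulVec (g : ℕ → ℝ) (h0 : g 0 = 0) (hn : g n = 0)
    (j : Fin n) :
    ((diffMatrix 1 n)ᵀ *ᵥ fun i => g (i + 1)) j = g j - g (j + 1) := by
  simp only [mulVec, dotProduct, transpose_apply, diffMatrix_one_apply, sub_mul, ite_mul, one_mul,
    zero_mul, sum_sub_distrib, eq_comm (a := (j : ℕ)), Fin.sum_ite_val_eq]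
  rcases j with ⟨_ | k, hk⟩
  · simp only [Nat.add_eq_zero_iff, one_ne_zero, and_false, if_false, sum_const_zero, zero_sub, h0]
    split_ifs
    · simp
    · obtain rfl : n = 1 := by omega
      simp [hn]
  · simp only [Nat.add_right_cancel_iff, Fin.sum_ite_val_eq]
    rw [dif_pos (by omega)]
    split_ifs
    · rfl
    · obtain rfl : n = k + 2 := by omega
      simp [hn]

def cumSumMatrix (n : ℕ) : Matrix (Fin n) (Fin (n - 1)) ℝ :=
  fun j i => if (i : ℕ) < j then 1 else 0

theorem diffMatrix_one_mul_cumSumMatrix : diffMatrix 1 n * cumSumMatrix n = 1 := by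
  ext i i'
  refine (diffMatrix_one_mulVec (fun j => if (i' : ℕ) < j then 1 else 0) i).trans ?_
  simp only [one_apply, ← Fin.val_inj]
  split_ifs <;> first | omega | norm_num

theorem posDef_diffMatrix_one_mul_transpose :
    (diffMatrix 1 n * (diffMatrix 1 n)ᵀ).PosDef := by
  simpa using posDef_mul_conjTranspose_self_of_mul_eq_one diffMatrix_one_mul_cumSumMatrix

end DiffMatrix

section CUSUM

variable {n : ℕ} (y : Fin n → ℝ)

/-- `Σ_{k < m} (y_k - ȳ)`: the CUSUM of the centered data at the paper's (1-indexed) time `m`. -/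
noncomputable def centeredCusum (m : ℕ) : ℝ :=
  ∑ k : Fin n, if (k : ℕ) < m then y k - (∑ j, y j) / n else 0

theorem centeredCusum_zero : centeredCusum y 0 = 0 := by
  simp [centeredCusum]

theorem centeredCusum_self : centeredCusum y n = 0 := by
  rcases eq_or_ne n 0 with rfl | hn
  · simp [centeredCusum]
  · have hn' : (n : ℝ) ≠ 0 := Nat.cast_ne_zero.2 hn
    simp [centeredCusum, sum_sub_distrib, mul_div_cancel₀ _ hn']

theorem centeredCusum_succ_sub (j : Fin n) :
    centeredCusum y (j + 1) - centeredCusum y j = y j - (∑ k, y k) / n := by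
  rw [centeredCusum, centeredCusum, ← sum_sub_distrib,
    ← Fintype.sum_ite_eq' j fun k => y k - (∑ i, y i) / n]
  refine sum_congr rfl fun k _ => ?_
  simp only [← Fin.val_inj]
  split_ifs <;> first | omega | simp

theorem centeredCusum_eq_sub {m : ℕ} (hm : m ≤ n) :
    centeredCusum y m =
      ∑ k : Fin n, (if (k : ℕ) < m then y k else 0) - m * ((∑ k, y k) / n) := by
  rw [centeredCusum, ← sum_filter, ← sum_filter, sum_sub_distrib, sum_const,
    Fin.card_filter_val_lt, min_eq_right hm, nsmul_eq_mul]

theorem diffMatrix_one_transpose_mulVec_centeredCusum :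
    (diffMatrix 1 n)ᵀ *ᵥ (fun i : Fin (n - 1) => -centeredCusum y ((i : ℕ) + 1)) =
      y - fun _ => (∑ k, y k) / n := by
  ext j
  rw [diffMatrix_one_transpose_mulVec (fun m => -centeredCusum y m) (by simp [centeredCusum_zero])
    (by simp [centeredCusum_self]), Pi.sub_apply]
  linarith [centeredCusum_succ_sub y j]

theorem inv_mul_diffMatrix_one_mulVec :
    ((diffMatrix 1 n * (diffMatrix 1 n)ᵀ)⁻¹ * diffMatrix 1 n) *ᵥ y =
      fun i : Fin (n - 1) => -centeredCusum y ((i : ℕ) + 1) := by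
  have := posDef_diffMatrix_one_mul_transpose (n := n) |>.isUnit.invertible
  rw [← mulVec_mulVec]
  refine inv_mulVec_eq_vec ?_
  rw [← mulVec_mulVec, diffMatrix_one_transpose_mulVec_centeredCusum, mulVec_sub,
    diffMatrix_one_mulVec_const, sub_zero]

end CUSUM

theorem stmt13_general (n : ℕ) (y : Fin n → ℝ) (t : Fin (n - 1)) :
    ((((diffMatrix 1 n * (diffMatrix 1 n)ᵀ)⁻¹ * diffMatrix 1 n).mulVec y) t =
      (((t : ℕ) : ℝ) + 1) / (n : ℝ) * (∑ k : Fin n, y k) -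
        ∑ k : Fin n, (if (k : ℕ) ≤ (t : ℕ) then y k else 0)) ∧
    ((((diffMatrix 1 n * (diffMatrix 1 n)ᵀ)⁻¹ * diffMatrix 1 n).mulVec y) t =
      - ∑ k : Fin n,
          (if (k : ℕ) ≤ (t : ℕ) then y k - (∑ j : Fin n, y j) / (n : ℝ) else 0)) := by
  simp only [inv_mul_diffMatrix_one_mulVec]
  refine ⟨?_, ?_⟩
  · rw [centeredCusum_eq_sub y (m := t + 1) (by omega)]
    simp only [Nat.lt_succ_iff]
    push_cast
    ring
  · simp only [centeredCusum, Nat.lt_succ_iff]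

/-- For the first-order difference matrix `D = D^{(1)}`, the dual vector `(DDᵀ)⁻¹Dy` is, up
to sign, the CUSUM process of `y`: its `t`-th coordinate (with `t : Fin (n-1)` representing
the 1-indexed time `t+1`) equals `((t+1)/n)·Σ_k y_k − Σ_{k ≤ t} y_k`, i.e. minus the partial
sum of the centered observations. -/
theorem stmt13 (n : ℕ) (hn : 2 ≤ n) (y : Fin n → ℝ) (t : Fin (n - 1)) :
    ((((diffMatrix 1 n * (diffMatrix 1 n)ᵀ)⁻¹ * diffMatrix 1 n).mulVec y) t =
      (((t : ℕ) : ℝ) + 1) / (n : ℝ) * (∑ k : Fin n, y k) -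
        ∑ k : Fin n, (if (k : ℕ) ≤ (t : ℕ) then y k else 0)) ∧
    ((((diffMatrix 1 n * (diffMatrix 1 n)ᵀ)⁻¹ * diffMatrix 1 n).mulVec y) t =
      - ∑ k : Fin n,
          (if (k : ℕ) ≤ (t : ℕ) then y k - (∑ j : Fin n, y j) / (n : ℝ) else 0)) :=
  stmt13_general n y t
end

section
/- Fix r ≥ 0, let d = r + 1, r_b = ⌈d/2⌉ − 1 and r_a = ⌊d/2⌋ (so r_a + r_b + 1 = d). Let n > d, m = n − d, and let D = D^{(d)} be the d-th order difference matrix. Let τ₁ < τ₂ be integers with r_b + 1 ≤ τ₁, τ₁ + r_a + 1 < τ₂ − r_b, and τ₂ + r_a ≤ m. Let A = {τ₁ − r_b, …, τ₁ + r_a} ∪ {τ₂ − r_b, …, τ₂ + r_a}, let S = {1,…,m} \ A, let s ∈ {−1, +1}, and set v = s · Σ_{i ∈ A} (D_i)ᵀ ∈ ℝⁿ, where D_i is the i-th row of D. Then for every t ∈ S with τ₁ + r_a < t < τ₂ − r_b, the coordinate of (D_S D_Sᵀ)⁻¹ D_S v indexed by row t equals −s. -/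
/-!
The vector `(D_S D_Sᵀ)⁻¹ D_S v` is the unique solution `x` of `D_S D_Sᵀ x = D_S v`. Since
`v = -Dᵀ (z·1_A)` for any `z` equal to `-s` on `A`, it suffices to find such a `z` on all rows
with `(D Dᵀ z)_i = 0` for every `i ∈ S`: then `x = z|_S`. Up to the sign `(-1)^d`, row `i` of
`D Dᵀ z` is the `2d`-th forward difference of `z` (extended by `0`) at `i - d`, so it vanishes as
soon as `z` agrees with a polynomial of degree `< 2d` on `[i - d, i + d]`. Take `z = -s` on the
whole plateau from the first window to the second, and on each of the two outer zones the
Lagrange polynomial of degree `< 2d` that equals `-s` on the adjacent window and `0` on the `d`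
points beyond the boundary; every window around a row of `S` then lies in one polynomial piece.
-/

open Matrix BigOperators

/-- `r_a = ⌊(r+1)/2⌋`. -/
def ra (r : ℕ) : ℕ := (r + 1) / 2

/-- `r_b = ⌈(r+1)/2⌉ − 1`. -/
def rb (r : ℕ) : ℕ := (r + 2) / 2 - 1

section GramMatrix

variable {ι κ R : Type*} [Fintype ι] [Fintype κ] [DecidableEq ι]

theorem isUnit_det_mul_transpose_of_vecMul_injective [Field R] [LinearOrder R]
    [IsStrictOrderedRing R] {B : Matrix ι κ R} (hB : Function.Injective B.vecMul) :
    IsUnit (B * Bᵀ).det := by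
  rw [isUnit_iff_ne_zero, Ne, ← Matrix.exists_mulVec_eq_zero_iff]
  rintro ⟨x, hx0, hx⟩
  have hquad : (Bᵀ *ᵥ x) ⬝ᵥ (Bᵀ *ᵥ x) = 0 := by
    rw [Matrix.dotProduct_mulVec, Matrix.vecMul_transpose, Matrix.mulVec_mulVec, hx,
      zero_dotProduct]
  refine hx0 (hB ?_)
  change x ᵥ* B = 0 ᵥ* B
  rw [Matrix.zero_vecMul, ← Matrix.mulVec_transpose]
  exact dotProduct_self_eq_zero.mp hquad

variable [CommRing R]

theorem inv_mul_submatrix_mulVec_eq (M : Matrix ι κ R) {S : Finset ι} {B : Matrix S κ R}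
    (hB : B = M.submatrix (↑) id) (hdet : IsUnit (B * Bᵀ).det) (z : ι → R) (v : κ → R)
    (hz : ∀ i ∈ S, (M *ᵥ (Mᵀ *ᵥ z)) i = 0) (hv : ∀ j, v j = -∑ i ∈ Sᶜ, M i j * z i) :
    ((B * Bᵀ)⁻¹ * B) *ᵥ v = fun p : S => z p := by
  have hsplit : Bᵀ *ᵥ (fun p : S => z p) = Mᵀ *ᵥ z + v := by
    ext j
    simp only [Matrix.mulVec, dotProduct, Matrix.transpose_apply, Pi.add_apply, hv, hB,
      Matrix.submatrix_apply, id]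
    rw [← Finset.sum_add_sum_compl S (fun i => M i j * z i),
      Finset.sum_coe_sort S (fun i => M i j * z i)]
    ring
  have hnormal : (B * Bᵀ) *ᵥ (fun p : S => z p) = B *ᵥ v := by
    rw [← Matrix.mulVec_mulVec, hsplit, Matrix.mulVec_add, add_eq_right]
    ext p
    rw [hB]
    exact hz p p.2
  rw [← Matrix.mulVec_mulVec, ← hnormal, Matrix.mulVec_mulVec, Matrix.nonsing_inv_mul _ hdet,
    Matrix.one_mulVec]

end GramMatrix

section FiniteDifferences

open fwdDiff

theorem fwdDiff_iter_eq_zero_of_eqOn_polynomial {R : Type*} [CommRing R] {f : ℤ → R}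
    {P : Polynomial R} {N : ℕ} (hP : P.natDegree < N) {y : ℤ}
    (hf : ∀ k ≤ N, f (y + k) = P.eval ((y + k : ℤ) : R)) :
    (Δ_[1])^[N] f y = 0 := by
  have hpoly : (Δ_[1])^[N] P.eval (y : R) = 0 := by
    rw [Polynomial.fwdDiff_iter_eq_zero_of_degree_lt hP, Pi.zero_apply]
  rw [fwdDiff_iter_eq_sum_shift] at hpoly ⊢
  rw [← hpoly]
  refine Finset.sum_congr rfl fun k hk => ?_
  rw [nsmul_one, nsmul_one, hf k (by simpa [Nat.lt_succ_iff] using hk)]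
  push_cast
  rfl

theorem exists_natDegree_lt_eqOn_two_blocks {K : Type*} [Field K] [CharZero K] {d : ℕ}
    (hd : 0 < d) {u v : ℤ} (huv : u + d ≤ v) (y₀ y₁ : K) :
    ∃ P : Polynomial K, P.natDegree < 2 * d ∧
      (∀ x : ℤ, u ≤ x → x < u + d → P.eval (x : K) = y₀) ∧
      (∀ x : ℤ, v ≤ x → x < v + d → P.eval (x : K) = y₁) := by
  set nodes := Finset.Ico u (u + d) ∪ Finset.Ico v (v + d)
  have hinj : Set.InjOn (fun x : ℤ => (x : K)) nodes := Int.cast_injective.injOn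
  have hcard : nodes.card = 2 * d := by
    rw [Finset.card_union_of_disjoint, Int.card_Ico, Int.card_Ico]
    · omega
    · exact Finset.disjoint_left.mpr fun x hx hx' => by
        rw [Finset.mem_Ico] at hx hx'
        omega
  set P := Lagrange.interpolate nodes (fun x : ℤ => (x : K)) (fun x => if x < u + d then y₀ else y₁)
  have hP : ∀ x ∈ nodes, P.eval (x : K) = if x < u + d then y₀ else y₁ :=
    fun x hx => Lagrange.eval_interpolate_at_node _ hinj hx
  refine ⟨P, ?_, fun x h₁ h₂ => ?_, fun x h₁ h₂ => ?_⟩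
  · have hdeg := Lagrange.degree_interpolate_lt (fun x => if x < u + d then y₀ else y₁) hinj
    rw [hcard] at hdeg
    by_cases hP0 : P = 0
    · rw [hP0, Polynomial.natDegree_zero]
      omega
    · exact (Polynomial.natDegree_lt_iff_degree_lt hP0).mpr hdeg
  · rw [hP x (by simp [nodes]; omega), if_pos h₂]
  · rw [hP x (by simp [nodes]; omega), if_neg (by omega)]

theorem exists_plateau_fwdDiff_iter_eq_zero {d : ℕ} (hd : 0 < d) {a b m : ℤ} (c : ℝ)
    (ha : 0 ≤ a) (hab : a + 2 * d ≤ b + 1) (hbm : b < m) :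
    ∃ Z : ℤ → ℝ, (∀ x, x < 0 ∨ m ≤ x → Z x = 0) ∧ (∀ x, a ≤ x → x ≤ b → Z x = c) ∧
      ∀ i, 0 ≤ i → i < m → (i < a ∨ a + d ≤ i ∧ i + d ≤ b ∨ b < i) →
        (Δ_[1])^[2 * d] Z (i - d) = 0 := by
  obtain ⟨p, hp, hp₀, hp₁⟩ :=
    exists_natDegree_lt_eqOn_two_blocks hd (u := -d) (v := a) (by omega) 0 c
  obtain ⟨q, hq, hq₀, hq₁⟩ :=
    exists_natDegree_lt_eqOn_two_blocks hd (u := b + 1 - d) (v := m) (by omega) c 0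
  let Z : ℤ → ℝ := fun x =>
    if x < 0 ∨ m ≤ x then 0 else if x < a then p.eval (x : ℝ) else if x ≤ b then c
    else q.eval (x : ℝ)
  refine ⟨Z, fun x hx => if_pos hx, fun x h₁ h₂ => ?_, ?_⟩
  · simp only [Z]
    rw [if_neg (by omega), if_neg (by omega), if_pos h₂]
  rintro i hi₀ him (hleft | hmid | hright)
  · refine fwdDiff_iter_eq_zero_of_eqOn_polynomial hp fun k hk => ?_
    simp only [Z]
    split_ifs
    · exact (hp₀ _ (by omega) (by omega)).symm
    · rfl
    · exact (hp₁ _ (by omega) (by omega)).symm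
    · omega
  · refine fwdDiff_iter_eq_zero_of_eqOn_polynomial (P := Polynomial.C c) (by simp; omega)
      fun k hk => ?_
    simp only [Z, Polynomial.eval_C]
    rw [if_neg (by omega), if_neg (by omega), if_pos (by omega)]
  · refine fwdDiff_iter_eq_zero_of_eqOn_polynomial hq fun k hk => ?_
    simp only [Z]
    split_ifs
    · exact (hq₁ _ (by omega) (by omega)).symm
    · omega
    · exact (hq₀ _ (by omega) (by omega)).symm
    · rfl

end FiniteDifferences

section DiffMatrix

open fwdDiff

variable {d n : ℕ}

theorem diffMatrix_apply_eq_sum (i : Fin (n - d)) (j : Fin n) :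
    diffMatrix d n i j = ∑ k ∈ Finset.range (d + 1),
      if (j : ℕ) = i + k then (-1 : ℝ) ^ (d - k) * d.choose k else 0 := by
  rw [diffMatrix]
  split_ifs with h
  · rw [Finset.sum_eq_single ((j : ℕ) - i)]
    · rw [if_pos (by omega)]
    · intro k _ hk
      exact if_neg (by omega)
    · intro hk
      exact absurd (Finset.mem_range.mpr (by omega)) hk
  · refine (Finset.sum_eq_zero fun k hk => if_neg ?_).symm
    rw [Finset.mem_range] at hk
    omega

theorem diffMatrix_mulVec_apply (W : ℤ → ℝ) (i : Fin (n - d)) :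
    (diffMatrix d n *ᵥ fun j => W (j : ℕ)) i = (Δ_[1])^[d] W i := by
  rw [fwdDiff_iter_eq_sum_shift]
  simp only [Matrix.mulVec, dotProduct, diffMatrix_apply_eq_sum, Finset.sum_mul]
  rw [Finset.sum_comm]
  refine Finset.sum_congr rfl fun k hk => ?_
  rw [Finset.mem_range] at hk
  have hik : (i : ℕ) + k < n := by omega
  rw [Finset.sum_eq_single ⟨i + k, hik⟩]
  · rw [if_pos rfl, zsmul_eq_mul, nsmul_one]
    push_cast
    rfl
  · intro j _ hj
    rw [if_neg fun h => hj (Fin.ext h), zero_mul]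
  · exact fun h => absurd (Finset.mem_univ _) h

theorem diffMatrix_transpose_mulVec_apply (Z : ℤ → ℝ)
    (hZ : ∀ x, x < 0 ∨ ((n - d : ℕ) : ℤ) ≤ x → Z x = 0) (j : Fin n) :
    ((diffMatrix d n)ᵀ *ᵥ fun i => Z (i : ℕ)) j = (-1) ^ d * (Δ_[1])^[d] Z (j - d) := by
  have hcol : ∀ k ∈ Finset.range (d + 1),
      ∑ i : Fin (n - d), (if (j : ℕ) = i + k then (-1 : ℝ) ^ (d - k) * d.choose k else 0) *
        Z (i : ℕ) = (-1 : ℝ) ^ (d - k) * d.choose k * Z (j - k) := by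
    intro k hk
    by_cases hjk : k ≤ (j : ℕ) ∧ (j : ℕ) - k < n - d
    · rw [Finset.sum_eq_single ⟨j - k, hjk.2⟩]
      · rw [if_pos (by simp; omega)]
        push_cast [hjk.1]
        rfl
      · intro i _ hi
        rw [if_neg fun h => hi (Fin.ext (by simp; omega)), zero_mul]
      · exact fun h => absurd (Finset.mem_univ _) h
    · rw [hZ _ (by omega), mul_zero]
      refine Finset.sum_eq_zero fun i _ => ?_
      rw [if_neg (by omega), zero_mul]
  simp only [Matrix.mulVec, dotProduct, Matrix.transpose_apply, diffMatrix_apply_eq_sum,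
    Finset.sum_mul]
  rw [Finset.sum_comm, Finset.sum_congr rfl hcol, fwdDiff_iter_eq_sum_shift, Finset.mul_sum,
    ← Finset.sum_range_reflect]
  refine Finset.sum_congr rfl fun k hk => ?_
  rw [Finset.mem_range, Nat.lt_succ_iff] at hk
  rw [zsmul_eq_mul, nsmul_one, show d + 1 - 1 - k = d - k by omega, Nat.choose_symm hk,
    Nat.sub_sub_self hk]
  have hsign : (-1 : ℝ) ^ k = (-1) ^ d * (-1) ^ (d - k) := by
    rw [← pow_add, show d + (d - k) = k + 2 * (d - k) by omega, pow_add, pow_mul, neg_one_sq,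
      one_pow, mul_one]
  rw [hsign, show ((j : ℕ) : ℤ) - ((d - k : ℕ) : ℤ) = (j : ℕ) - d + k by omega]
  push_cast
  ring

theorem diffMatrix_mulVec_transpose_mulVec_apply (Z : ℤ → ℝ)
    (hZ : ∀ x, x < 0 ∨ ((n - d : ℕ) : ℤ) ≤ x → Z x = 0) (i : Fin (n - d)) :
    (diffMatrix d n *ᵥ ((diffMatrix d n)ᵀ *ᵥ fun i => Z (i : ℕ))) i =
      (-1) ^ d * (Δ_[1])^[2 * d] Z (i - d) := by
  have hcols : ((diffMatrix d n)ᵀ *ᵥ fun i => Z (i : ℕ)) =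
      fun j : Fin n => ((-1 : ℝ) ^ d • fun x => (Δ_[1])^[d] Z (x + -d)) (j : ℕ) := by
    ext j
    rw [diffMatrix_transpose_mulVec_apply Z hZ, Pi.smul_apply, smul_eq_mul, sub_eq_add_neg]
  rw [hcols, diffMatrix_mulVec_apply, fwdDiff_iter_const_smul, Pi.smul_apply, smul_eq_mul,
    fwdDiff_iter_comp_add, ← Function.iterate_add_apply, two_mul, sub_eq_add_neg]

theorem diffMatrix_apply_of_lt {i : Fin (n - d)} {j : Fin n} (h : (j : ℕ) < i) :
    diffMatrix d n i j = 0 :=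
  if_neg (by omega)

theorem diffMatrix_apply_self (i : Fin (n - d)) (hi : (i : ℕ) < n) :
    diffMatrix d n i ⟨i, hi⟩ = (-1) ^ d := by
  simp [diffMatrix]

theorem vecMul_rowSub_diffMatrix_injective (S : Finset (Fin (n - d))) :
    Function.Injective (rowSub (diffMatrix d n) S).vecMul := by
  rw [← Matrix.coe_vecMulLinear, injective_iff_map_eq_zero]
  intro x hx
  by_contra hne
  obtain ⟨p, hp, hmin⟩ := Finset.exists_min_image (Finset.univ.filter (x · ≠ 0))
    (fun p : S => (p : Fin (n - d))) (by simpa [Finset.filter_nonempty_iff, funext_iff] using hne)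
  rw [Finset.mem_filter] at hp
  have hpn : ((p : Fin (n - d)) : ℕ) < n := by omega
  have hcol := congr_fun hx ⟨p, hpn⟩
  simp only [Matrix.coe_vecMulLinear, Matrix.vecMul, dotProduct, Pi.zero_apply] at hcol
  rw [Finset.sum_eq_single p] at hcol
  · exact hp.2 (by simpa [rowSub, diffMatrix_apply_self] using hcol)
  · intro q _ hq
    by_cases hxq : x q = 0
    · rw [hxq, zero_mul]
    · have hpq : (p : Fin (n - d)) < q := lt_of_le_of_ne
        (hmin q (Finset.mem_filter.mpr ⟨Finset.mem_univ _, hxq⟩)) fun h => hq (Subtype.ext h).symm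
      rw [rowSub, Matrix.submatrix_apply, diffMatrix_apply_of_lt hpq, mul_zero]
  · exact fun h => absurd (Finset.mem_univ _) h

end DiffMatrix

/-- A row `i : Fin (n - (r+1))` represents the 1-indexed row `i + 1` of `D = D^{(r+1)}`. -/
theorem stmt16_general (r n : ℕ) (τ₁ τ₂ : ℕ) (s : ℝ)
    (h1 : rb r + 1 ≤ τ₁)
    (h2 : τ₁ + ra r + 1 < τ₂ - rb r)
    (h3 : τ₂ + ra r ≤ n - (r + 1)) :
    ∀ (A : Finset (Fin (n - (r + 1)))),
      A = Finset.univ.filter (fun i : Fin (n - (r + 1)) =>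
        (τ₁ - rb r ≤ (i : ℕ) + 1 ∧ (i : ℕ) + 1 ≤ τ₁ + ra r) ∨
        (τ₂ - rb r ≤ (i : ℕ) + 1 ∧ (i : ℕ) + 1 ≤ τ₂ + ra r)) →
      ∀ (v : Fin n → ℝ), v = (fun j => s * ∑ i ∈ A, diffMatrix (r + 1) n i j) →
      ∀ (t : Fin (n - (r + 1))) (ht : t ∈ Aᶜ),
        τ₁ + ra r < (t : ℕ) + 1 → (t : ℕ) + 1 < τ₂ - rb r →
        (((rowSub (diffMatrix (r + 1) n) Aᶜ * (rowSub (diffMatrix (r + 1) n) Aᶜ)ᵀ)⁻¹ *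
            rowSub (diffMatrix (r + 1) n) Aᶜ).mulVec v) ⟨t, ht⟩ = -s := by
  intro A hA v hv t ht ht₁ ht₂
  have hr : ra r + rb r = r := by unfold ra rb; omega
  have hmem : ∀ i : Fin (n - (r + 1)), i ∈ A ↔
      (τ₁ - rb r ≤ (i : ℕ) + 1 ∧ (i : ℕ) + 1 ≤ τ₁ + ra r) ∨
        (τ₂ - rb r ≤ (i : ℕ) + 1 ∧ (i : ℕ) + 1 ≤ τ₂ + ra r) := by
    simp [hA]
  -- 0-indexed, the two windows of `A` are `[a, a + r]` and `[b - r, b]`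
  obtain ⟨Z, hZ₀, hZc, hZ⟩ := exists_plateau_fwdDiff_iter_eq_zero r.succ_pos (-s)
    (a := τ₁ - rb r - 1) (b := τ₂ + ra r - 1) (m := (n - (r + 1) : ℕ)) (by omega) (by omega)
    (by omega)
  have hnormal : ∀ i ∈ Aᶜ, (diffMatrix (r + 1) n *ᵥ ((diffMatrix (r + 1) n)ᵀ *ᵥ
      fun i => Z (i : ℕ))) i = 0 := by
    intro i hi
    rw [Finset.mem_compl, hmem] at hi
    rw [diffMatrix_mulVec_transpose_mulVec_apply Z hZ₀, hZ _ (by omega) (by omega) (by omega),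
      mul_zero]
  have hv_eq : ∀ j, v j = -∑ i ∈ Aᶜᶜ, diffMatrix (r + 1) n i j * Z (i : ℕ) := by
    intro j
    simp only [hv]
    rw [compl_compl, Finset.mul_sum, ← Finset.sum_neg_distrib]
    refine Finset.sum_congr rfl fun i hi => ?_
    rw [hmem] at hi
    rw [hZc _ (by omega) (by omega)]
    ring
  have hdet := isUnit_det_mul_transpose_of_vecMul_injective
    (vecMul_rowSub_diffMatrix_injective (d := r + 1) (n := n) Aᶜ)
  rw [inv_mul_submatrix_mulVec_eq (diffMatrix (r + 1) n) (B := rowSub _ Aᶜ) rfl hdet _ v hnormal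
    hv_eq]
  exact hZc (t : ℕ) (by omega) (by omega)

/-- Staircase drift identity: if two change points `τ₁ < τ₂` carry the same sign `s`,
`A` is the union of the two corresponding augmented boundary windows,
`S = Aᶜ` and `v = s · Σ_{i ∈ A} (D_i)ᵀ`, then every coordinate of `(D_S D_Sᵀ)⁻¹ D_S v`
strictly between the two windows equals `−s`.  A row `i : Fin (n - (r+1))` represents
the 1-indexed row `i + 1` of `D = D^{(r+1)}`. -/
theorem stmt16 (r n : ℕ) (hn : r + 1 < n) (τ₁ τ₂ : ℕ) (s : ℝ) (hs : s = 1 ∨ s = -1)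
    (h1 : rb r + 1 ≤ τ₁)
    (h2 : τ₁ + ra r + 1 < τ₂ - rb r)
    (h3 : τ₂ + ra r ≤ n - (r + 1)) :
    ∀ (A : Finset (Fin (n - (r + 1)))),
      A = Finset.univ.filter (fun i : Fin (n - (r + 1)) =>
        (τ₁ - rb r ≤ (i : ℕ) + 1 ∧ (i : ℕ) + 1 ≤ τ₁ + ra r) ∨
        (τ₂ - rb r ≤ (i : ℕ) + 1 ∧ (i : ℕ) + 1 ≤ τ₂ + ra r)) →
      ∀ (v : Fin n → ℝ), v = (fun j => s * ∑ i ∈ A, diffMatrix (r + 1) n i j) →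
      ∀ (t : Fin (n - (r + 1))) (ht : t ∈ Aᶜ),
        τ₁ + ra r < (t : ℕ) + 1 → (t : ℕ) + 1 < τ₂ - rb r →
        (((rowSub (diffMatrix (r + 1) n) Aᶜ * (rowSub (diffMatrix (r + 1) n) Aᶜ)ᵀ)⁻¹ *
            rowSub (diffMatrix (r + 1) n) Aᶜ).mulVec v) ⟨t, ht⟩ = -s :=
  stmt16_general r n τ₁ τ₂ s h1 h2 h3
end
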